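/- For finite multisets x and y of natural numbers of the same cardinality, x ≤_m y if and only if the list of elements of x sorted in non-increasing order is ≤_lex the list of elements of y sorted in non-increasing order. -/

import Mathlib

/-!
Sorting non-increasingly lists the maximum first and then sorts what is left:
`sortDesc s = mmax s :: sortDesc (s.erase (mmax s))`. Hence `sortDesc` carries the recursion
defining `<ₘ` clause by clause onto the recursion defining `List.Lex`, and the strict orders
agree; the non-strict ones then agree because `sortDesc` is injective.
-/

namespace MsetPaper

/-- The maximum element of a multiset of naturals (`0` for the empty multiset). -/
def mmax (s : Multiset ℕ) : ℕ := s.sup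

/-- The strict multiset order `x <ₘ y` of the paper: either `x` is empty and `y` is not,
or both are nonempty and either `max x < max y`, or the maxima agree and the multisets
with one occurrence of the maximum removed are again strictly ordered. -/
inductive MLt : Multiset ℕ → Multiset ℕ → Prop
  | empty {y : Multiset ℕ} : y ≠ 0 → MLt 0 y
  | maxLt {x y : Multiset ℕ} : x ≠ 0 → y ≠ 0 → mmax x < mmax y → MLt x y
  | maxEq {x y : Multiset ℕ} : x ≠ 0 → y ≠ 0 → mmax x = mmax y →
      MLt (x.erase (mmax x)) (y.erase (mmax y)) → MLt x y

/-- The (non-strict) multiset order `x ≤ₘ y`. -/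
def MLe (x y : Multiset ℕ) : Prop := MLt x y ∨ x = y

/-- The multiset of values taken by a vector. -/
def msetOf {n : ℕ} (x : Fin n → ℕ) : Multiset ℕ := (List.ofFn x : List ℕ)

/-- The list of elements of a multiset sorted in non-increasing order. -/
def sortDesc (s : Multiset ℕ) : List ℕ := (s.sort (· ≤ ·)).reverse

/-- Lexicographic order on lists: equal, or at the first position where they differ the
first list has the strictly smaller entry. -/
def LexLe (l₁ l₂ : List ℕ) : Prop := l₁ = l₂ ∨ List.Lex (· < ·) l₁ l₂

lemma mmax_mem {s : Multiset ℕ} (hs : s ≠ 0) : mmax s ∈ s := by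
  classical
  have hsup : mmax s = s.toFinset.sup id := by
    rw [mmax, Finset.sup_def, Multiset.toFinset_val, Multiset.map_id, Multiset.sup_dedup]
  obtain ⟨a, ha, hmax⟩ := Finset.sup_mem_of_nonempty (f := id) (Multiset.toFinset_nonempty.mpr hs)
  rw [hsup, ← hmax]
  exact Multiset.mem_toFinset.mp ha

lemma zero_mlt_iff {y : Multiset ℕ} : MLt 0 y ↔ y ≠ 0 := by
  refine ⟨?_, .empty⟩
  rintro (hy | ⟨h0, -⟩ | ⟨h0, -⟩)
  exacts [hy, absurd rfl h0, absurd rfl h0]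

lemma not_mlt_zero (x : Multiset ℕ) : ¬MLt x 0 := by
  rintro (h0 | ⟨-, h0, -⟩ | ⟨-, h0, -⟩) <;> exact h0 rfl

lemma mlt_iff_of_ne_zero {x y : Multiset ℕ} (hx : x ≠ 0) (hy : y ≠ 0) :
    MLt x y ↔ mmax x < mmax y ∨ mmax x = mmax y ∧ MLt (x.erase (mmax x)) (y.erase (mmax y)) := by
  constructor
  · rintro (_ | ⟨-, -, hlt⟩ | ⟨-, -, heq, hrest⟩)
    exacts [absurd rfl hx, .inl hlt, .inr ⟨heq, hrest⟩]
  · rintro (hlt | ⟨heq, hrest⟩)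
    exacts [.maxLt hx hy hlt, .maxEq hx hy heq hrest]

lemma sortDesc_eq_sort_ge (s : Multiset ℕ) : sortDesc s = s.sort (· ≥ ·) :=
  List.Perm.eq_of_pairwise' (List.pairwise_reverse.mpr (s.pairwise_sort _)) (s.pairwise_sort _)
    (Multiset.coe_eq_coe.mp <| by
      rw [sortDesc, Multiset.coe_reverse, Multiset.sort_eq, Multiset.sort_eq])

lemma sortDesc_injective : Function.Injective sortDesc := fun s t hst => by
  rw [← Multiset.sort_eq s (· ≥ ·), ← Multiset.sort_eq t (· ≥ ·), ← sortDesc_eq_sort_ge,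
    ← sortDesc_eq_sort_ge, hst]

lemma sortDesc_zero : sortDesc 0 = [] := by
  rw [sortDesc_eq_sort_ge, Multiset.sort_zero]

lemma sortDesc_eq_nil_iff {s : Multiset ℕ} : sortDesc s = [] ↔ s = 0 := by
  rw [← sortDesc_zero, sortDesc_injective.eq_iff]

lemma sortDesc_eq_mmax_cons {s : Multiset ℕ} (hs : s ≠ 0) :
    sortDesc s = mmax s :: sortDesc (s.erase (mmax s)) := by
  rw [sortDesc_eq_sort_ge, sortDesc_eq_sort_ge, ← Multiset.sort_cons,
    Multiset.cons_erase (mmax_mem hs)]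
  exact fun b hb => Multiset.le_sup (Multiset.mem_of_mem_erase hb)

lemma mlt_iff_lex_sortDesc (x y : Multiset ℕ) :
    MLt x y ↔ List.Lex (· < ·) (sortDesc x) (sortDesc y) := by
  rcases eq_or_ne x 0 with rfl | hx
  · rw [zero_mlt_iff, Ne, ← sortDesc_eq_nil_iff, sortDesc_zero]
    exact ⟨(List.lex_nil_or_eq_nil _).resolve_right,
      fun hlex hnil => List.not_lex_nil (hnil ▸ hlex)⟩
  rcases eq_or_ne y 0 with rfl | hy
  · simp only [not_mlt_zero, sortDesc_zero, List.not_lex_nil]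
  rw [mlt_iff_of_ne_zero hx hy, sortDesc_eq_mmax_cons hx, sortDesc_eq_mmax_cons hy,
    List.cons_lex_cons_iff, mlt_iff_lex_sortDesc (x.erase _)]
termination_by Multiset.card x
decreasing_by exact Multiset.card_erase_lt_of_mem (mmax_mem hx)

theorem stmt6_general (x y : Multiset ℕ) :
    MLe x y ↔ LexLe (sortDesc x) (sortDesc y) := by
  rw [MLe, LexLe, mlt_iff_lex_sortDesc, sortDesc_injective.eq_iff, or_comm]

/-- For multisets of equal cardinality, `x ≤ₘ y` iff the non-increasingly sorted
lists of their elements are lexicographically ordered. -/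
theorem stmt6 (x y : Multiset ℕ) (h : Multiset.card x = Multiset.card y) :
    MLe x y ↔ LexLe (sortDesc x) (sortDesc y) :=
  stmt6_general x y

end MsetPaper
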